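/- arXiv:2103.07818 — 2 statements merged into one kernel-verified Lean document; each statement's English description precedes it below -/
import Mathlib

section
/- Let s ≥ 1, let y_1,…,y_s ∈ ℝ, let γ > 0 and λ ≥ 0, and let α ≥ 0. Then the optimal-partitioning recursion value Cost(y_{1:s}, α; γ) = min_{0 ≤ τ < s} { F(τ) + (1/2) Σ_{t=τ+1}^{s} (y_t − α γ^{t−s})² + λ } equals the minimum, over all integers k ≥ 0, all changepoint vectors 0 = τ_0 < τ_1 < … < τ_k < τ_{k+1} = s, and all amplitudes α_0,…,α_k ≥ 0 with α_k = α, of the constrained changepoint objective (1/2) Σ_{j=0}^{k} Σ_{t=τ_j+1}^{τ_{j+1}} (y_t − α_j γ^{t−τ_{j+1}})² + λk. -/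
/-- Segment cost `D(a, b, α) = (1/2) ∑_{t=a+1}^{b} (y_t − α γ^{t−b})²`. -/
noncomputable def segCost (y : ℕ → ℝ) (γ : ℝ) (a b : ℕ) (α : ℝ) : ℝ :=
  (1/2) * ∑ t ∈ Finset.Icc (a+1) b, (y t - α * γ ^ ((t : ℤ) - (b : ℤ)))^2

/-- `τ` is a segmentation of the interval `{a+1,…,b}` with `k` changepoints:
`a = τ 0 < τ 1 < … < τ k < τ (k+1) = b`. -/
def IsSeg (a b k : ℕ) (τ : ℕ → ℕ) : Prop :=
  τ 0 = a ∧ τ (k+1) = b ∧ ∀ j ≤ k, τ j < τ (j+1)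

/-- Changepoint objective with per-segment amplitudes:
`∑_{j=0}^{k} D(τ_j, τ_{j+1}, α_j) + λ k`. -/
noncomputable def objAmp (y : ℕ → ℝ) (γ lam : ℝ) (k : ℕ) (τ : ℕ → ℕ) (α : ℕ → ℝ) : ℝ :=
  (∑ j ∈ Finset.range (k+1), segCost y γ (τ j) (τ (j+1)) (α j)) + lam * k

/-- `F(τ)`: the optimal cost of segmenting the first `τ` data points
(minimum of the changepoint objective over segmentations and nonnegative
amplitudes), with the convention `F(0) = −λ`. -/
noncomputable def Fval (y : ℕ → ℝ) (γ lam : ℝ) : ℕ → ℝ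
  | 0 => -lam
  | s+1 => sInf { c | ∃ (k : ℕ) (τ : ℕ → ℕ) (a : ℕ → ℝ), IsSeg 0 (s+1) k τ ∧
      (∀ j ≤ k, 0 ≤ a j) ∧ c = objAmp y γ lam k τ a }

/-- `Cost(y_{1:s}, α; γ) = min_{0 ≤ τ < s} { F(τ) + D(τ, s, α) + λ }`. -/
noncomputable def Cost (y : ℕ → ℝ) (γ lam : ℝ) (s : ℕ) (α : ℝ) : ℝ :=
  sInf { c | ∃ τ : ℕ, τ < s ∧ c = Fval y γ lam τ + segCost y γ τ s α + lam }

/-- Optimal segment cost `min_{α ≥ 0} D(a, b, α)`. -/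
noncomputable def segMin (y : ℕ → ℝ) (γ : ℝ) (a b : ℕ) : ℝ :=
  sInf { c | ∃ α : ℝ, 0 ≤ α ∧ c = segCost y γ a b α }

/-- Changepoint objective with each segment's amplitude optimized separately:
`∑_{j=0}^{k} min_{α ≥ 0} D(τ_j, τ_{j+1}, α) + λ k`. -/
noncomputable def objOpt (y : ℕ → ℝ) (γ lam : ℝ) (k : ℕ) (τ : ℕ → ℕ) : ℝ :=
  (∑ j ∈ Finset.range (k+1), segMin y γ (τ j) (τ (j+1))) + lam * k

/-!
Removing the last segment `(τ_k, s]` of a segmentation of `{1,…,s}` whose last amplitude is `α`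
leaves an arbitrary segmentation of `{1,…,τ_k}` with `τ_k < s`, and conversely every such
segmentation extends by that segment; the objective changes by `D(τ_k, s, α) + λ`. For `k = 0`
the remainder is the empty segmentation, whose value `-λ` is the convention `F(0) = -λ`. So the
constrained values are the union over `τ < s` of the prefix values shifted by `D(τ, s, α) + λ`,
and the infimum of that union is `min_τ (F(τ) + D(τ, s, α) + λ)`.
-/

theorem csInf_csInf_add_eq_csInf_add {ι : Type*} (p : ι → Prop) (hp : ∃ i, p i)
    (P : ι → Set ℝ) (hP : ∀ i, p i → (P i).Nonempty) (d : ι → ℝ) (b : ℝ)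
    (hb : ∀ i, p i → ∀ x ∈ P i, b ≤ x + d i) :
    sInf {c | ∃ i, p i ∧ c = sInf (P i) + d i} =
      sInf {c | ∃ i, p i ∧ ∃ x ∈ P i, c = x + d i} := by
  obtain ⟨i₀, hi₀⟩ := hp
  obtain ⟨x₀, hx₀⟩ := hP i₀ hi₀
  apply le_antisymm
  · refine le_csInf ⟨x₀ + d i₀, i₀, hi₀, x₀, hx₀, rfl⟩ ?_
    rintro c ⟨i, hi, x, hx, rfl⟩
    have hbdd : BddBelow {c | ∃ i, p i ∧ c = sInf (P i) + d i} := by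
      refine ⟨b, ?_⟩
      rintro c ⟨j, hj, rfl⟩
      have hj_le : b - d j ≤ sInf (P j) :=
        le_csInf (hP j hj) fun x hx => by linarith [hb j hj x hx]
      linarith
    calc sInf _ ≤ sInf (P i) + d i := csInf_le hbdd ⟨i, hi, rfl⟩
      _ ≤ x + d i := by
        gcongr
        exact csInf_le ⟨b - d i, fun x hx => by linarith [hb i hi x hx]⟩ hx
  · refine le_csInf ⟨_, i₀, hi₀, rfl⟩ ?_
    rintro c ⟨i, hi, rfl⟩
    have hbdd : BddBelow {c | ∃ i, p i ∧ ∃ x ∈ P i, c = x + d i} := by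
      refine ⟨b, ?_⟩
      rintro c ⟨j, hj, x, hx, rfl⟩
      exact hb j hj x hx
    have hi_le : sInf {c | ∃ i, p i ∧ ∃ x ∈ P i, c = x + d i} - d i ≤ sInf (P i) :=
      le_csInf (hP i hi) fun x hx => by
        linarith [csInf_le hbdd ⟨i, hi, x, hx, rfl⟩]
    linarith

theorem IsSeg.left_lt_right {a b k : ℕ} {τ : ℕ → ℕ} (h : IsSeg a b k τ) : a < b := by
  obtain ⟨h0, hlast, hlt⟩ := h
  have hbound : ∀ j ≤ k, a < τ (j + 1) := by
    intro j hj
    induction j with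
    | zero => exact h0 ▸ hlt 0 hj
    | succ j ih => exact (ih (by omega)).trans (hlt (j + 1) hj)
  exact hlast ▸ hbound k le_rfl

theorem isSeg_single {a b : ℕ} (hab : a < b) : IsSeg a b 0 (fun j => if j = 0 then a else b) :=
  ⟨rfl, rfl, fun j hj => by simpa [Nat.le_zero.mp hj] using hab⟩

theorem IsSeg.snoc {a m s k : ℕ} {τ : ℕ → ℕ} (h : IsSeg a m k τ) (hms : m < s) :
    IsSeg a s (k + 1) (Function.update τ (k + 2) s) := by
  obtain ⟨h0, hlast, hlt⟩ := h
  refine ⟨by simp [h0], by simp, fun j hj => ?_⟩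
  rcases Nat.lt_or_ge j (k + 1) with hj' | hj'
  · simpa [Function.update_of_ne (show j ≠ k + 2 by omega),
      Function.update_of_ne (show j + 1 ≠ k + 2 by omega)] using hlt j (by omega)
  · obtain rfl : j = k + 1 := by omega
    simpa [hlast] using hms

theorem IsSeg.dropLast {a s k : ℕ} {τ : ℕ → ℕ} (h : IsSeg a s (k + 1) τ) :
    IsSeg a (τ (k + 1)) k τ :=
  ⟨h.1, rfl, fun j hj => h.2.2 j (by omega)⟩

theorem segCost_nonneg (y : ℕ → ℝ) (γ : ℝ) (a b : ℕ) (α : ℝ) : 0 ≤ segCost y γ a b α :=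
  mul_nonneg (by norm_num) (Finset.sum_nonneg fun _ _ => sq_nonneg _)

theorem objAmp_nonneg (y : ℕ → ℝ) (γ : ℝ) {lam : ℝ} (hlam : 0 ≤ lam) (k : ℕ) (τ : ℕ → ℕ)
    (a : ℕ → ℝ) : 0 ≤ objAmp y γ lam k τ a :=
  add_nonneg (Finset.sum_nonneg fun _ _ => segCost_nonneg _ _ _ _ _) (by positivity)

theorem objAmp_zero (y : ℕ → ℝ) (γ lam : ℝ) (τ : ℕ → ℕ) (a : ℕ → ℝ) :
    objAmp y γ lam 0 τ a = segCost y γ (τ 0) (τ 1) (a 0) := by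
  simp [objAmp]

theorem objAmp_succ (y : ℕ → ℝ) (γ lam : ℝ) (k : ℕ) (τ : ℕ → ℕ) (a : ℕ → ℝ) :
    objAmp y γ lam (k + 1) τ a =
      objAmp y γ lam k τ a + segCost y γ (τ (k + 1)) (τ (k + 2)) (a (k + 1)) + lam := by
  simp only [objAmp, Finset.sum_range_succ, Nat.cast_succ]
  ring

theorem objAmp_snoc (y : ℕ → ℝ) (γ lam : ℝ) (k : ℕ) (τ : ℕ → ℕ) (a : ℕ → ℝ) (s : ℕ)
    (α : ℝ) :
    objAmp y γ lam (k + 1) (Function.update τ (k + 2) s) (Function.update a (k + 1) α) =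
      objAmp y γ lam k τ a + segCost y γ (τ (k + 1)) s α + lam := by
  have hprefix : objAmp y γ lam k (Function.update τ (k + 2) s) (Function.update a (k + 1) α) =
      objAmp y γ lam k τ a := by
    refine congrArg (· + _) (Finset.sum_congr rfl fun j hj => ?_)
    rw [Finset.mem_range] at hj
    rw [Function.update_of_ne (show j ≠ k + 2 by omega),
      Function.update_of_ne (show j + 1 ≠ k + 2 by omega),
      Function.update_of_ne (show j ≠ k + 1 by omega)]
  rw [objAmp_succ, hprefix]
  simp

def prefixVals (y : ℕ → ℝ) (γ lam : ℝ) : ℕ → Set ℝ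
  | 0 => {-lam}
  | m + 1 => {c | ∃ (k : ℕ) (τ : ℕ → ℕ) (a : ℕ → ℝ), IsSeg 0 (m + 1) k τ ∧
      (∀ j ≤ k, 0 ≤ a j) ∧ c = objAmp y γ lam k τ a}

theorem Fval_eq_sInf_prefixVals (y : ℕ → ℝ) (γ lam : ℝ) (m : ℕ) :
    Fval y γ lam m = sInf (prefixVals y γ lam m) := by
  cases m with
  | zero => simp [Fval, prefixVals]
  | succ m => rfl

theorem prefixVals_nonempty (y : ℕ → ℝ) (γ lam : ℝ) (m : ℕ) :
    (prefixVals y γ lam m).Nonempty := by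
  cases m with
  | zero => exact Set.singleton_nonempty _
  | succ m => exact ⟨_, 0, _, fun _ => 0, isSeg_single m.succ_pos, fun _ _ => le_rfl, rfl⟩

theorem add_lam_nonneg_of_mem_prefixVals (y : ℕ → ℝ) (γ : ℝ) {lam : ℝ} (hlam : 0 ≤ lam)
    {m : ℕ} {x : ℝ} (hx : x ∈ prefixVals y γ lam m) : 0 ≤ x + lam := by
  cases m with
  | zero => simp [show x = -lam from hx]
  | succ m =>
    obtain ⟨k, τ, a, -, -, rfl⟩ := hx
    linarith [objAmp_nonneg y γ hlam k τ a]

def constrainedVals (y : ℕ → ℝ) (γ lam : ℝ) (s : ℕ) (α : ℝ) : Set ℝ :=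
  {c | ∃ (k : ℕ) (τ : ℕ → ℕ) (a : ℕ → ℝ), IsSeg 0 s k τ ∧
    (∀ j ≤ k, 0 ≤ a j) ∧ a k = α ∧ c = objAmp y γ lam k τ a}

theorem constrainedVals_eq (y : ℕ → ℝ) (γ lam : ℝ) (s : ℕ) {α : ℝ} (hα : 0 ≤ α) :
    constrainedVals y γ lam s α =
      {c | ∃ m, m < s ∧ ∃ x ∈ prefixVals y γ lam m, c = x + (segCost y γ m s α + lam)} := by
  ext c
  constructor
  · rintro ⟨k, τ, a, hseg, ha, rfl, rfl⟩
    cases k with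
    | zero =>
      refine ⟨0, hseg.left_lt_right, -lam, rfl, ?_⟩
      rw [objAmp_zero, hseg.1, hseg.2.1]
      ring
    | succ k =>
      have hpre := hseg.dropLast
      obtain ⟨m, hm⟩ : ∃ m, τ (k + 1) = m + 1 :=
        Nat.exists_eq_add_one.mpr (hseg.1 ▸ hpre.left_lt_right)
      refine ⟨τ (k + 1), hseg.2.1 ▸ hseg.2.2 (k + 1) le_rfl, objAmp y γ lam k τ a,
        hm ▸ ⟨k, τ, a, hm ▸ hpre, fun j hj => ha j (by omega), rfl⟩, ?_⟩
      rw [objAmp_succ, hseg.2.1]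
      ring
  · rintro ⟨m, hms, x, hx, rfl⟩
    cases m with
    | zero =>
      refine ⟨0, _, fun _ => α, isSeg_single hms, fun _ _ => hα, rfl, ?_⟩
      rw [objAmp_zero, show x = -lam from hx]
      simp
    | succ m =>
      obtain ⟨k, τ, a, hseg, ha, rfl⟩ := hx
      refine ⟨k + 1, _, Function.update a (k + 1) α, hseg.snoc hms, fun j hj => ?_,
        by simp, ?_⟩
      · rcases eq_or_ne j (k + 1) with rfl | hne
        · simpa using hα
        · simpa [Function.update_of_ne hne] using ha j (by omega)
      · rw [objAmp_snoc, hseg.2.1]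
        ring

theorem cost_eq_constrained_changepoint_general (s : ℕ) (hs : 1 ≤ s) (y : ℕ → ℝ)
    (γ lam : ℝ) (hlam : 0 ≤ lam) (α : ℝ) (hα : 0 ≤ α) :
    Cost y γ lam s α =
      sInf { c | ∃ (k : ℕ) (τ : ℕ → ℕ) (a : ℕ → ℝ), IsSeg 0 s k τ ∧
        (∀ j ≤ k, 0 ≤ a j) ∧ a k = α ∧ c = objAmp y γ lam k τ a } := by
  calc Cost y γ lam s α
      = sInf {c | ∃ m, m < s ∧
          c = sInf (prefixVals y γ lam m) + (segCost y γ m s α + lam)} := by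
        simp only [Cost, Fval_eq_sInf_prefixVals, add_assoc]
    _ = sInf {c | ∃ m, m < s ∧ ∃ x ∈ prefixVals y γ lam m,
          c = x + (segCost y γ m s α + lam)} :=
        csInf_csInf_add_eq_csInf_add _ ⟨0, hs⟩ _ (fun m _ => prefixVals_nonempty y γ lam m) _ 0
          fun m _ x hx => by
            linarith [add_lam_nonneg_of_mem_prefixVals y γ hlam hx, segCost_nonneg y γ m s α]
    _ = sInf (constrainedVals y γ lam s α) := by rw [constrainedVals_eq y γ lam s hα]

/-- For `s ≥ 1`, `γ > 0`, `λ ≥ 0`, and `α ≥ 0`, the recursion value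
`Cost(y_{1:s}, α; γ)` equals the minimum of the changepoint objective over all
segmentations of `{1,…,s}` and nonnegative amplitudes whose last amplitude is `α`. -/
theorem cost_eq_constrained_changepoint (s : ℕ) (hs : 1 ≤ s) (y : ℕ → ℝ)
    (γ lam : ℝ) (hγ : 0 < γ) (hlam : 0 ≤ lam) (α : ℝ) (hα : 0 ≤ α) :
    Cost y γ lam s α =
      sInf { c | ∃ (k : ℕ) (τ : ℕ → ℕ) (a : ℕ → ℝ), IsSeg 0 s k τ ∧
        (∀ j ≤ k, 0 ≤ a j) ∧ a k = α ∧ c = objAmp y γ lam k τ a } :=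
  cost_eq_constrained_changepoint_general s hs y γ lam hlam α hα
end

section
/- Let T ≥ 2, let y_1,…,y_T ∈ ℝ, let γ > 0, λ ≥ 0, and let m be an integer with 1 ≤ m < T. Define C = min_{α ≥ 0} Cost(y_{1:m}, α; γ) + min_{α ≥ 0} Cost(y_{T:(m+1)}, α; 1/γ) + λ and C′ = min_{α ≥ 0} { Cost(y_{1:m}, α; γ) + Cost(y_{T:(m+1)}, γα; 1/γ) }, where the Costs on the interval {1,…,m} use the data (y_1,…,y_m) with decay γ and those on {m+1,…,T} use the time-reversed data (y_T,…,y_{m+1}) with decay 1/γ. Then C ≤ C′ if and only if there exists a segmentation 0 = τ_0 < τ_1 < … < τ_k < τ_{k+1} = T of {1,…,T} achieving the unconstrained minimum of the changepoint objective Σ_{j=0}^{k} min_{α ≥ 0} { (1/2) Σ_{t=τ_j+1}^{τ_{j+1}} (y_t − α γ^{t−τ_{j+1}})² } + λk (over all k ≥ 0 and all segmentations) whose changepoint set {τ_1,…,τ_k} contains m; i.e., C ≤ C′ exactly when m is an estimated changepoint of the ℓ0 changepoint problem applied to y. -/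
namespace IsSeg

variable {a b d k k' N : ℕ} {τ τ' : ℕ → ℕ}

theorem strictMonoOn (h : IsSeg a b k τ) : StrictMonoOn τ (Set.Iic (k + 1)) :=
  strictMonoOn_Iic_of_lt_succ fun j hj => h.2.2 j (Nat.lt_succ_iff.mp hj)

theorem le_right (h : IsSeg a b k τ) {j : ℕ} (hj : j ≤ k + 1) : τ j ≤ b :=
  h.2.1 ▸ h.strictMonoOn.monotoneOn hj (le_refl (k + 1)) hj

theorem add_le (h : IsSeg a b k τ) : ∀ {j : ℕ}, j ≤ k + 1 → a + j ≤ τ j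
  | 0, _ => h.1.ge
  | j + 1, hj => (add_le h (by omega)).trans_lt (h.2.2 j (by omega))

theorem add_succ_le (h : IsSeg a b k τ) : a + (k + 1) ≤ b :=
  h.2.1 ▸ h.add_le le_rfl

theorem take (h : IsSeg a b k τ) {j : ℕ} (hj : j ≤ k) : IsSeg a (τ (j + 1)) j τ :=
  ⟨h.1, rfl, fun i hi => h.2.2 i (by omega)⟩

theorem drop (h : IsSeg a b k τ) {j : ℕ} (hj : j < k) :
    IsSeg (τ (j + 1)) b (k - j - 1) (fun i => τ (j + 1 + i)) :=
  ⟨rfl, by simp only [show j + 1 + (k - j - 1 + 1) = k + 1 by omega, h.2.1],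
    fun i hi => h.2.2 (j + 1 + i) (by omega)⟩

theorem append (h : IsSeg a b k τ) (h' : IsSeg b d k' τ') :
    IsSeg a d (k + k' + 1) (fun i => if i ≤ k then τ i else τ' (i - (k + 1))) := by
  refine ⟨by simp [h.1], ?_, ?_⟩
  · simp [show ¬ k + k' + 1 + 1 ≤ k by omega, show k + k' + 1 + 1 - (k + 1) = k' + 1 by omega,
      h'.2.1]
  intro i hi
  rcases lt_trichotomy i k with hik | rfl | hik
  · simpa [hik.le, Nat.succ_le_of_lt hik] using h.2.2 i hik.le
  · simpa [h'.1, ← h.2.1] using h.2.2 i le_rfl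
  · simpa [show ¬ i ≤ k by omega, show ¬ i < k by omega,
      show i + 1 - (k + 1) = i - (k + 1) + 1 by omega]
      using h'.2.2 (i - (k + 1)) (by omega)

theorem rev (h : IsSeg a b k τ) (hb : b ≤ N) :
    IsSeg (N - b) (N - a) k (fun i => N - τ (k + 1 - i)) := by
  refine ⟨by simp [h.2.1], by simp [h.1], fun i hi => ?_⟩
  have hlt := h.2.2 (k - i) (by omega)
  have hle := h.le_right (j := k - i + 1) (by omega)
  simp only [show k + 1 - (i + 1) = k - i by omega, show k + 1 - i = k - i + 1 by omega]
  omega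

theorem eq_or_crossing (h : IsSeg a b k τ) {m : ℕ} (ham : a < m) (hmb : m < b) :
    (∃ j, 1 ≤ j ∧ j ≤ k ∧ τ j = m) ∨ ∃ j ≤ k, τ j < m ∧ m < τ (j + 1) := by
  classical
  have hex : ∃ j, m ≤ τ j := ⟨k + 1, h.2.1 ▸ hmb.le⟩
  set j := Nat.find hex
  have hspec : m ≤ τ j := Nat.find_spec hex
  have hjk : j ≤ k + 1 := Nat.find_min' hex (h.2.1 ▸ hmb.le)
  have hj0 : j ≠ 0 := by
    intro h0
    rw [h0, h.1] at hspec
    omega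
  have hprev : τ (j - 1) < m := not_le.mp (Nat.find_min hex (by omega))
  rcases hspec.eq_or_lt with heq | hlt
  · refine Or.inl ⟨j, by omega, ?_, heq.symm⟩
    by_contra hk
    rw [show j = k + 1 by omega, h.2.1] at heq
    omega
  · exact Or.inr ⟨j - 1, by omega, hprev, by rwa [show j - 1 + 1 = j by omega]⟩

end IsSeg

section Segmentation

variable (c : ℕ → ℕ → ℝ) (lam : ℝ)

def segValue (k : ℕ) (τ : ℕ → ℕ) : ℝ :=
  (∑ j ∈ Finset.range (k + 1), c (τ j) (τ (j + 1))) + lam * k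

def segValueSet (a b : ℕ) : Set ℝ :=
  {v | ∃ (k : ℕ) (τ : ℕ → ℕ), IsSeg a b k τ ∧ v = segValue c lam k τ}

/-- The value `-lam` on an empty interval makes the additive formulas below hold
also when one of the pieces is empty. -/
noncomputable def optSeg (a b : ℕ) : ℝ :=
  if a < b then sInf (segValueSet c lam a b) else -lam

variable {c lam} {c' : ℕ → ℕ → ℝ} {a b d k t w N : ℕ} {τ τ' : ℕ → ℕ}

theorem segValue_congr (h : ∀ j ≤ k + 1, τ j = τ' j) :
    segValue c lam k τ = segValue c lam k τ' := by
  unfold segValue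
  congr 1
  exact Finset.sum_congr rfl fun j hj => by
    rw [Finset.mem_range] at hj
    rw [h j (by omega), h (j + 1) (by omega)]

theorem segValue_add (k₁ k₂ : ℕ) (τ : ℕ → ℕ) :
    segValue c lam (k₁ + k₂ + 1) τ =
      segValue c lam k₁ τ + segValue c lam k₂ (fun i => τ (k₁ + 1 + i)) + lam := by
  simp only [segValue, show k₁ + k₂ + 1 + 1 = (k₁ + 1) + (k₂ + 1) by omega,
    Finset.sum_range_add, ← add_assoc]
  push_cast
  ring

theorem segValue_rev (hc : ∀ u v, u ≤ v → v ≤ N → c' u v = c (N - v) (N - u))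
    (h : IsSeg a b k τ) (hb : b ≤ N) :
    segValue c lam k (fun i => N - τ (k + 1 - i)) = segValue c' lam k τ := by
  unfold segValue
  congr 1
  rw [← Finset.sum_range_reflect]
  refine Finset.sum_congr rfl fun j hj => ?_
  rw [Finset.mem_range] at hj
  rw [hc _ _ (h.2.2 j (by omega)).le ((h.le_right (j := j + 1) (by omega)).trans hb)]
  simp only [show k + 1 - (k + 1 - 1 - j) = j + 1 by omega,
    show k + 1 - (k + 1 - 1 - j + 1) = j by omega]

theorem segValueSet_finite (a b : ℕ) : (segValueSet c lam a b).Finite := by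
  -- a segmentation value depends only on `k ≤ b` and on `τ` restricted to `{0, …, b}`
  let Φ : Fin (b + 1) × (Fin (b + 1) → Fin (b + 1)) → ℝ := fun p =>
    segValue c lam p.1 (fun j => if hj : j < b + 1 then p.2 ⟨j, hj⟩ else 0)
  refine (Set.finite_range Φ).subset ?_
  rintro v ⟨k, τ, h, rfl⟩
  have hk := h.add_succ_le
  refine ⟨(⟨k, by omega⟩, fun i => ⟨min (τ i) b, by omega⟩),
    segValue_congr fun j hj => ?_⟩
  change j ≤ k + 1 at hj
  simp [show j < b + 1 by omega, h.le_right hj]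

theorem segValueSet_nonempty (hab : a < b) : (segValueSet c lam a b).Nonempty :=
  ⟨_, 0, fun i => if i = 0 then a else b, ⟨rfl, rfl, fun j hj => by simp_all⟩, rfl⟩

theorem optSeg_le_segValue (h : IsSeg a b k τ) : optSeg c lam a b ≤ segValue c lam k τ := by
  rw [optSeg, if_pos (by have := h.add_succ_le; omega)]
  exact csInf_le (segValueSet_finite a b).bddBelow ⟨k, τ, h, rfl⟩

theorem exists_segValue_eq_optSeg (hab : a < b) :
    ∃ k τ, IsSeg a b k τ ∧ segValue c lam k τ = optSeg c lam a b := by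
  obtain ⟨k, τ, h, hv⟩ := (segValueSet_nonempty hab).csInf_mem (segValueSet_finite a b)
  exact ⟨k, τ, h, by rw [optSeg, if_pos hab, hv]⟩

theorem optSeg_self (a : ℕ) : optSeg c lam a a = -lam := if_neg (lt_irrefl a)

theorem optSeg_le_cost (hab : a < b) : optSeg c lam a b ≤ c a b := by
  simpa [segValue] using optSeg_le_segValue (c := c) (lam := lam)
    (k := 0) (τ := fun i => if i = 0 then a else b) ⟨rfl, rfl, fun j hj => by simp_all⟩

theorem exists_segValue_eq_optSeg_add (hab : a < b) (hbd : b < d) :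
    ∃ k τ, IsSeg a d k τ ∧ (∃ j, 1 ≤ j ∧ j ≤ k ∧ τ j = b) ∧
      segValue c lam k τ = optSeg c lam a b + optSeg c lam b d + lam := by
  obtain ⟨k, τ, h, hv⟩ := exists_segValue_eq_optSeg (c := c) (lam := lam) hab
  obtain ⟨k', τ', h', hv'⟩ := exists_segValue_eq_optSeg (c := c) (lam := lam) hbd
  refine ⟨_, _, h.append h', ⟨k + 1, by omega, by omega, by simpa using h'.1⟩, ?_⟩
  rw [segValue_add, ← hv, ← hv']
  congr 2
  · exact segValue_congr fun j hj => by
      rcases hj.lt_or_eq with hj | rfl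
      · simp [show j ≤ k by omega]
      · simp [h'.1, h.2.1]
  · exact segValue_congr fun j _ => by
      rcases j with _ | j
      · simp [h'.1]
      · simp [show ¬ k + 1 + (j + 1) ≤ k by omega,
          show k + 1 + (j + 1) - (k + 1) = j + 1 by omega]

theorem optSeg_le_optSeg_add (hab : a ≤ b) (hbd : b ≤ d) :
    optSeg c lam a d ≤ optSeg c lam a b + optSeg c lam b d + lam := by
  rcases hab.eq_or_lt with rfl | hab
  · simp [optSeg_self]
  rcases hbd.eq_or_lt with rfl | hbd
  · simp [optSeg_self]
  obtain ⟨k, τ, h, -, hv⟩ := exists_segValue_eq_optSeg_add (c := c) (lam := lam) hab hbd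
  exact hv ▸ optSeg_le_segValue h

theorem optSeg_le_optSeg_add_cost_add (hat : a ≤ t) (htw : t < w) (hwb : w ≤ b) :
    optSeg c lam a b ≤ optSeg c lam a t + c t w + optSeg c lam w b + 2 * lam := by
  have := optSeg_le_optSeg_add (c := c) (lam := lam) (hat.trans htw.le) hwb
  have := optSeg_le_optSeg_add (c := c) (lam := lam) hat htw.le
  have := optSeg_le_cost (c := c) (lam := lam) htw
  linarith

theorem optSeg_rev (hc : ∀ u v, u ≤ v → v ≤ N → c' u v = c (N - v) (N - u))
    (hab : a ≤ b) (hb : b ≤ N) :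
    optSeg c' lam a b = optSeg c lam (N - b) (N - a) := by
  unfold optSeg
  by_cases hab' : a < b
  · rw [if_pos hab', if_pos (by omega)]
    congr 1
    ext v
    constructor
    · rintro ⟨k, τ, h, rfl⟩
      exact ⟨k, _, h.rev hb, (segValue_rev hc h hb).symm⟩
    · rintro ⟨k, τ, h, rfl⟩
      have h' := h.rev (Nat.sub_le N a)
      rw [show N - (N - a) = a by omega, show N - (N - b) = b by omega] at h'
      refine ⟨k, _, h', (segValue_rev (fun u v huv hv => ?_) h (by omega)).symm⟩
      rw [hc _ _ (by omega) (by omega), show N - (N - u) = u by omega,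
        show N - (N - v) = v by omega]
  · rw [if_neg hab', if_neg (by omega)]

end Segmentation

section Bounds

variable {c : ℕ → ℕ → ℝ} {lam : ℝ} {a b k : ℕ} {τ : ℕ → ℕ}

theorem optSeg_add_cost_le_segValue (h : IsSeg a b k τ) :
    optSeg c lam a (τ k) + c (τ k) b + lam ≤ segValue c lam k τ := by
  rcases k with _ | k
  · simp [segValue, h.1, ← h.2.1, optSeg_self]
  · have hsplit := segValue_add (c := c) (lam := lam) k 0 τ
    have hprefix := optSeg_le_segValue (c := c) (lam := lam) (h.take k.le_succ)
    simp only [add_zero, segValue, zero_add, Finset.sum_range_one, Nat.cast_zero,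
      mul_zero, h.2.1] at hsplit hprefix ⊢
    linarith

theorem segValue_add_optSeg_le (h : IsSeg a b k τ) {j : ℕ} (hj : j ≤ k) :
    segValue c lam j τ + optSeg c lam (τ (j + 1)) b + lam ≤ segValue c lam k τ := by
  rcases hj.eq_or_lt with rfl | hj
  · simp [h.2.1, optSeg_self]
  · have hsplit := segValue_add (c := c) (lam := lam) j (k - j - 1) τ
    rw [show j + (k - j - 1) + 1 = k by omega] at hsplit
    linarith [optSeg_le_segValue (c := c) (lam := lam) (h.drop hj)]

theorem optSeg_add_optSeg_le_segValue (h : IsSeg a b k τ) {j : ℕ} (hj₁ : 1 ≤ j)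
    (hjk : j ≤ k) :
    optSeg c lam a (τ j) + optSeg c lam (τ j) b + lam ≤ segValue c lam k τ := by
  obtain ⟨i, rfl⟩ : ∃ i, j = i + 1 := ⟨j - 1, by omega⟩
  linarith [segValue_add_optSeg_le (c := c) (lam := lam) h (j := i) (by omega),
    optSeg_le_segValue (c := c) (lam := lam) (h.take (j := i) (by omega))]

theorem optSeg_add_cost_add_optSeg_le_segValue (h : IsSeg a b k τ) {j : ℕ} (hj : j ≤ k) :
    optSeg c lam a (τ j) + c (τ j) (τ (j + 1)) + optSeg c lam (τ (j + 1)) b + 2 * lam ≤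
      segValue c lam k τ := by
  linarith [segValue_add_optSeg_le (c := c) (lam := lam) h hj,
    optSeg_add_cost_le_segValue (c := c) (lam := lam) (h.take hj)]

end Bounds

theorem exists_forall_sum_sq_sub_mul_le {ι : Type*} (S : Finset ι) (f g : ι → ℝ) :
    ∃ α, 0 ≤ α ∧ ∀ β, 0 ≤ β →
      ∑ t ∈ S, (f t - α * g t) ^ 2 ≤ ∑ t ∈ S, (f t - β * g t) ^ 2 := by
  set A := ∑ t ∈ S, g t ^ 2
  set B := ∑ t ∈ S, f t * g t
  have hexpand : ∀ β : ℝ,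
      ∑ t ∈ S, (f t - β * g t) ^ 2 = ∑ t ∈ S, f t ^ 2 - 2 * β * B + β ^ 2 * A := by
    intro β
    simp only [B, A, Finset.mul_sum, ← Finset.sum_sub_distrib, ← Finset.sum_add_distrib]
    exact Finset.sum_congr rfl fun t _ => by ring
  have hA₀ : 0 ≤ A := Finset.sum_nonneg fun t _ => sq_nonneg (g t)
  simp only [hexpand]
  rcases le_or_gt B 0 with hB | hB
  · exact ⟨0, le_rfl, fun β hβ => by nlinarith [mul_nonneg hβ hβ]⟩
  · -- Cauchy–Schwarz `B ^ 2 ≤ (∑ f ^ 2) * A` rules out `A = 0`.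
    have hCS := Finset.sum_mul_sq_le_sq_mul_sq S f g
    have hA : 0 < A := by
      by_contra hA'
      nlinarith [show A = 0 by linarith, Finset.sum_nonneg fun t (_ : t ∈ S) => sq_nonneg (f t)]
    refine ⟨B / A, by positivity, fun β _ => ?_⟩
    have hsq : β ^ 2 * A - 2 * β * B - ((B / A) ^ 2 * A - 2 * (B / A) * B) =
        A * (β - B / A) ^ 2 := by
      field_simp
      ring
    nlinarith [mul_nonneg hA.le (sq_nonneg (β - B / A))]

section SegmentCost

variable {y : ℕ → ℝ} {γ lam : ℝ} {a b t m w T : ℕ}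

theorem objOpt_eq_segValue : objOpt y γ lam = segValue (segMin y γ) lam := rfl

theorem exists_isLeast_segCost (y : ℕ → ℝ) (γ : ℝ) (a b : ℕ) :
    ∃ α, 0 ≤ α ∧
      IsLeast {c | ∃ α : ℝ, 0 ≤ α ∧ c = segCost y γ a b α} (segCost y γ a b α) := by
  obtain ⟨α, hα, hmin⟩ := exists_forall_sum_sq_sub_mul_le (Finset.Icc (a + 1) b) y
    (fun t => γ ^ ((t : ℤ) - b))
  refine ⟨α, hα, ⟨α, hα, rfl⟩, ?_⟩
  rintro _ ⟨β, hβ, rfl⟩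
  exact mul_le_mul_of_nonneg_left (hmin β hβ) (by norm_num)

theorem exists_segCost_eq_segMin (y : ℕ → ℝ) (γ : ℝ) (a b : ℕ) :
    ∃ α, 0 ≤ α ∧ segCost y γ a b α = segMin y γ a b := by
  obtain ⟨α, hα, hleast⟩ := exists_isLeast_segCost y γ a b
  exact ⟨α, hα, hleast.csInf_eq.symm⟩

theorem segMin_le_segCost {α : ℝ} (hα : 0 ≤ α) :
    segMin y γ a b ≤ segCost y γ a b α := by
  obtain ⟨β, -, hleast⟩ := exists_isLeast_segCost y γ a b
  rw [segMin, hleast.csInf_eq]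
  exact hleast.2 ⟨α, hα, rfl⟩

theorem segCost_add (hγ : γ ≠ 0) (htm : t ≤ m) (hmw : m ≤ w) (α : ℝ) :
    segCost y γ t m α + segCost y γ m w (α * γ ^ ((w : ℤ) - m)) =
      segCost y γ t w (α * γ ^ ((w : ℤ) - m)) := by
  unfold segCost
  rw [← mul_add]
  congr 1
  simp only [Finset.Icc_add_one_left_eq_Ioc, ← Finset.sum_Ioc_consecutive _ htm hmw]
  congr 1
  refine Finset.sum_congr rfl fun u _ => ?_
  rw [mul_assoc, ← zpow_add₀ hγ]
  ring_nf

theorem segCost_rev (hγ : γ ≠ 0) (hbT : b ≤ T) (α : ℝ) :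
    segCost (fun t => y (T + 1 - t)) (1 / γ) a b α =
      segCost y γ (T - b) (T - a) (α * γ ^ ((b : ℤ) - a - 1)) := by
  unfold segCost
  congr 1
  refine Finset.sum_nbij' (fun t => T + 1 - t) (fun u => T + 1 - u) ?_ ?_ ?_ ?_ ?_ <;>
    intro t ht <;> simp only [Finset.mem_Icc] at ht ⊢
  · omega
  · omega
  · omega
  · omega
  · rw [one_div, inv_zpow', mul_assoc, ← zpow_add₀ hγ,
      show ((T + 1 - t : ℕ) : ℤ) = T + 1 - t by omega,
      show ((T - a : ℕ) : ℤ) = T - a by omega]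
    ring_nf

theorem segMin_rev (hγ : 0 < γ) (hbT : b ≤ T) :
    segMin (fun t => y (T + 1 - t)) (1 / γ) a b = segMin y γ (T - b) (T - a) := by
  unfold segMin
  congr 1
  ext v
  constructor
  · rintro ⟨α, hα, rfl⟩
    exact ⟨_, by positivity, segCost_rev hγ.ne' hbT α⟩
  · rintro ⟨β, hβ, rfl⟩
    refine ⟨β * γ ^ ((a : ℤ) + 1 - b), by positivity, ?_⟩
    rw [segCost_rev hγ.ne' hbT, mul_assoc, ← zpow_add₀ hγ.ne',
      show (a : ℤ) + 1 - b + (b - a - 1) = 0 by ring, zpow_zero, mul_one]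

theorem segCost_add_segCost_rev (hγ : γ ≠ 0) (htm : t ≤ m) (hmw : m ≤ w) (hwT : w ≤ T)
    (α : ℝ) :
    segCost y γ t m α + segCost (fun t => y (T + 1 - t)) (1 / γ) (T - w) (T - m) (γ * α) =
      segCost y γ t w (α * γ ^ ((w : ℤ) - m)) := by
  rw [segCost_rev hγ (by omega), show T - (T - m) = m by omega, show T - (T - w) = w by omega,
    ← segCost_add hγ htm hmw]
  congr 2
  rw [show (((T - m : ℕ) : ℤ) - (T - w : ℕ) - 1) = -1 + ((w : ℤ) - m) by omega,
    zpow_add₀ hγ, zpow_neg_one]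
  field_simp

end SegmentCost

section Cost

variable {y : ℕ → ℝ} {γ lam : ℝ} {t m w T s : ℕ}

theorem Fval_eq_optSeg (y : ℕ → ℝ) (γ lam : ℝ) (s : ℕ) :
    Fval y γ lam s = optSeg (segMin y γ) lam 0 s := by
  rcases s with _ | s
  · exact (optSeg_self 0).symm
  rw [Fval]
  refine IsLeast.csInf_eq ⟨?_, ?_⟩
  · obtain ⟨k, τ, h, hv⟩ :=
      exists_segValue_eq_optSeg (c := segMin y γ) (lam := lam) s.succ_pos
    choose α hα₀ hα using fun j => exists_segCost_eq_segMin y γ (τ j) (τ (j + 1))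
    exact ⟨k, τ, α, h, fun j _ => hα₀ j, by simp only [← hv, objAmp, segValue, hα]⟩
  · rintro _ ⟨k, τ, α, h, hα₀, rfl⟩
    refine (optSeg_le_segValue h).trans (add_le_add_left (Finset.sum_le_sum fun j hj => ?_) _)
    exact segMin_le_segCost (hα₀ j (Finset.mem_range_succ_iff.mp hj))

theorem optSeg_segMin_rev (hγ : 0 < γ) (hsT : s ≤ T) :
    optSeg (segMin (fun t => y (T + 1 - t)) (1 / γ)) lam 0 s =
      optSeg (segMin y γ) lam (T - s) T :=
  optSeg_rev (fun _ _ _ hv => segMin_rev hγ hv) s.zero_le hsT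

theorem Fval_rev (hγ : 0 < γ) (hsT : s ≤ T) :
    Fval (fun t => y (T + 1 - t)) (1 / γ) lam s = optSeg (segMin y γ) lam (T - s) T := by
  rw [Fval_eq_optSeg, optSeg_segMin_rev hγ hsT]

theorem finite_setOf_cost (y : ℕ → ℝ) (γ lam : ℝ) (s : ℕ) (α : ℝ) :
    {c | ∃ τ : ℕ, τ < s ∧ c = Fval y γ lam τ + segCost y γ τ s α + lam}.Finite :=
  ((Set.finite_Iio s).image _).subset fun _ ⟨t, ht, hc⟩ => ⟨t, ht, hc.symm⟩

theorem Cost_le (hts : t < s) (α : ℝ) :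
    Cost y γ lam s α ≤ Fval y γ lam t + segCost y γ t s α + lam :=
  csInf_le (finite_setOf_cost y γ lam s α).bddBelow ⟨t, hts, rfl⟩

theorem exists_Cost_eq (hs : 0 < s) (α : ℝ) :
    ∃ t < s, Cost y γ lam s α = Fval y γ lam t + segCost y γ t s α + lam := by
  refine Set.Nonempty.csInf_mem ?_ (finite_setOf_cost y γ lam s α)
  exact ⟨_, 0, hs, rfl⟩

theorem optSeg_le_Cost (hs : 0 < s) {α : ℝ} (hα : 0 ≤ α) :
    optSeg (segMin y γ) lam 0 s ≤ Cost y γ lam s α := by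
  obtain ⟨t, hts, hCost⟩ := exists_Cost_eq (y := y) (γ := γ) (lam := lam) hs α
  have := optSeg_le_optSeg_add_cost_add (c := segMin y γ) (lam := lam) t.zero_le hts le_rfl
  rw [optSeg_self] at this
  rw [hCost, Fval_eq_optSeg]
  linarith [segMin_le_segCost (y := y) (γ := γ) (a := t) (b := s) hα]

theorem isLeast_Cost (hs : 0 < s) :
    IsLeast {c | ∃ α : ℝ, 0 ≤ α ∧ c = Cost y γ lam s α}
      (optSeg (segMin y γ) lam 0 s) := by
  refine ⟨?_, by rintro _ ⟨α, hα, rfl⟩; exact optSeg_le_Cost hs hα⟩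
  obtain ⟨k, τ, h, hv⟩ := exists_segValue_eq_optSeg (c := segMin y γ) (lam := lam) hs
  obtain ⟨α, hα, hαmin⟩ := exists_segCost_eq_segMin y γ (τ k) s
  refine ⟨α, hα, le_antisymm (optSeg_le_Cost hs hα) ?_⟩
  have hlast := optSeg_add_cost_le_segValue (c := segMin y γ) (lam := lam) h
  have := Cost_le (y := y) (γ := γ) (lam := lam) (h.2.1 ▸ h.2.2 k le_rfl) α
  rw [Fval_eq_optSeg, hαmin] at this
  linarith

theorem optSeg_le_Cost_add_Cost (hγ : 0 < γ) (hm₀ : 0 < m) (hmT : m < T) {α : ℝ}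
    (hα : 0 ≤ α) :
    optSeg (segMin y γ) lam 0 T ≤
      Cost y γ lam m α + Cost (fun t => y (T + 1 - t)) (1 / γ) lam (T - m) (γ * α) := by
  obtain ⟨t, htm, hCost⟩ := exists_Cost_eq (y := y) (γ := γ) (lam := lam) hm₀ α
  obtain ⟨σ, hσ, hCost'⟩ := exists_Cost_eq (y := fun t => y (T + 1 - t)) (γ := 1 / γ)
    (lam := lam) (show 0 < T - m by omega) (γ * α)
  obtain ⟨w, hwT, rfl⟩ : ∃ w ≤ T, σ = T - w := ⟨T - σ, by omega, by omega⟩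
  rw [hCost, hCost', Fval_eq_optSeg, Fval_rev hγ (Nat.sub_le T w),
    show T - (T - w) = w by omega]
  have hjoin := segCost_add_segCost_rev (y := y) hγ.ne' htm.le (show m ≤ w by omega) hwT α
  have := segMin_le_segCost (y := y) (γ := γ) (a := t) (b := w)
    (show 0 ≤ α * γ ^ ((w : ℤ) - m) by positivity)
  have := optSeg_le_optSeg_add_cost_add (c := segMin y γ) (lam := lam) t.zero_le
    (show t < w by omega) hwT
  linarith

theorem optSeg_le_sInf_Cost_add_Cost (hγ : 0 < γ) (hm₀ : 0 < m) (hmT : m < T) :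
    optSeg (segMin y γ) lam 0 T ≤ sInf {c | ∃ α : ℝ, 0 ≤ α ∧
      c = Cost y γ lam m α + Cost (fun t => y (T + 1 - t)) (1 / γ) lam (T - m) (γ * α)} := by
  refine le_csInf ⟨_, 0, le_rfl, rfl⟩ ?_
  rintro _ ⟨α, hα, rfl⟩
  exact optSeg_le_Cost_add_Cost hγ hm₀ hmT hα

theorem sInf_Cost_add_Cost_le (hγ : 0 < γ) (htm : t < m) (hmw : m < w) (hwT : w ≤ T) :
    sInf {c | ∃ α : ℝ, 0 ≤ α ∧
      c = Cost y γ lam m α + Cost (fun t => y (T + 1 - t)) (1 / γ) lam (T - m) (γ * α)} ≤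
        optSeg (segMin y γ) lam 0 t + segMin y γ t w + optSeg (segMin y γ) lam w T +
          2 * lam := by
  obtain ⟨β, hβ, hβmin⟩ := exists_segCost_eq_segMin y γ t w
  set α := β * γ ^ ((m : ℤ) - w)
  have hbdd : BddBelow {c | ∃ α : ℝ, 0 ≤ α ∧
      c = Cost y γ lam m α + Cost (fun t => y (T + 1 - t)) (1 / γ) lam (T - m) (γ * α)} := by
    refine ⟨optSeg (segMin y γ) lam 0 T, ?_⟩
    rintro _ ⟨α, hα, rfl⟩
    exact optSeg_le_Cost_add_Cost hγ (by omega) (by omega) hα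
  refine (csInf_le hbdd ⟨α, by positivity, rfl⟩).trans ?_
  have hjoin := segCost_add_segCost_rev (y := y) hγ.ne' htm.le hmw.le hwT α
  rw [mul_assoc, ← zpow_add₀ hγ.ne', show (m : ℤ) - w + (w - m) = 0 by ring, zpow_zero,
    mul_one, hβmin] at hjoin
  have h₁ := Cost_le (y := y) (γ := γ) (lam := lam) htm α
  have h₂ := Cost_le (y := fun t => y (T + 1 - t)) (γ := 1 / γ) (lam := lam)
    (show T - w < T - m by omega) (γ * α)
  rw [Fval_eq_optSeg] at h₁
  rw [Fval_rev hγ (Nat.sub_le T w), show T - (T - w) = w by omega] at h₂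
  linarith

end Cost

theorem C_le_Cprime_iff_m_is_changepoint_general (T : ℕ) (y : ℕ → ℝ)
    (γ lam : ℝ) (hγ : 0 < γ) (m : ℕ) (hm1 : 1 ≤ m) (hm2 : m < T) :
    (sInf { c | ∃ α : ℝ, 0 ≤ α ∧ c = Cost y γ lam m α } +
        sInf { c | ∃ α : ℝ, 0 ≤ α ∧
          c = Cost (fun t => y (T + 1 - t)) (1/γ) lam (T - m) α } + lam ≤
      sInf { c | ∃ α : ℝ, 0 ≤ α ∧ c = Cost y γ lam m α +
        Cost (fun t => y (T + 1 - t)) (1/γ) lam (T - m) (γ * α) }) ↔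
    ∃ (k : ℕ) (τ : ℕ → ℕ), IsSeg 0 T k τ ∧ (∃ j, 1 ≤ j ∧ j ≤ k ∧ τ j = m) ∧
      objOpt y γ lam k τ =
        sInf { c | ∃ (k' : ℕ) (τ' : ℕ → ℕ), IsSeg 0 T k' τ' ∧
          c = objOpt y γ lam k' τ' } := by
  have hopt : optSeg (segMin y γ) lam 0 T = sInf { c | ∃ (k' : ℕ) (τ' : ℕ → ℕ),
      IsSeg 0 T k' τ' ∧ c = objOpt y γ lam k' τ' } := if_pos (by omega)
  rw [(isLeast_Cost hm1).csInf_eq, (isLeast_Cost (by omega)).csInf_eq,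
    optSeg_segMin_rev hγ (Nat.sub_le T m), Nat.sub_sub_self hm2.le, ← hopt,
    objOpt_eq_segValue]
  constructor
  · intro hle
    have hC_le : optSeg (segMin y γ) lam 0 m + optSeg (segMin y γ) lam m T + lam ≤
        optSeg (segMin y γ) lam 0 T := by
      obtain ⟨k, τ, h, hv⟩ := exists_segValue_eq_optSeg (c := segMin y γ) (lam := lam)
        (show 0 < T by omega)
      rw [← hv]
      rcases h.eq_or_crossing hm1 hm2 with ⟨j, hj₁, hjk, rfl⟩ | ⟨j, hjk, htm, hmw⟩
      · exact optSeg_add_optSeg_le_segValue h hj₁ hjk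
      · have hwT := h.le_right (Nat.succ_le_succ hjk)
        exact hle.trans ((sInf_Cost_add_Cost_le hγ htm hmw hwT).trans
          (optSeg_add_cost_add_optSeg_le_segValue h hjk))
    obtain ⟨k, τ, h, hm, hv⟩ :=
      exists_segValue_eq_optSeg_add (c := segMin y γ) (lam := lam) hm1 hm2
    exact ⟨k, τ, h, hm, le_antisymm (hv ▸ hC_le) (optSeg_le_segValue h)⟩
  · rintro ⟨k, τ, h, ⟨j, hj₁, hjk, rfl⟩, hv⟩
    calc _ ≤ segValue (segMin y γ) lam k τ := optSeg_add_optSeg_le_segValue h hj₁ hjk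
      _ = optSeg (segMin y γ) lam 0 T := hv
      _ ≤ _ := optSeg_le_sInf_Cost_add_Cost hγ hm1 hm2

/-- with
`C  = min_{α ≥ 0} Cost(y_{1:m}, α; γ) + min_{α ≥ 0} Cost(y_{T:(m+1)}, α; 1/γ) + λ` and
`C′ = min_{α ≥ 0} { Cost(y_{1:m}, α; γ) + Cost(y_{T:(m+1)}, γα; 1/γ) }`,
we have `C ≤ C′` if and only if some segmentation of `{1,…,T}` achieving the unconstrained
minimum of the changepoint objective has `m` among its changepoints. -/
theorem C_le_Cprime_iff_m_is_changepoint (T : ℕ) (hT : 2 ≤ T) (y : ℕ → ℝ)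
    (γ lam : ℝ) (hγ : 0 < γ) (hlam : 0 ≤ lam) (m : ℕ) (hm1 : 1 ≤ m) (hm2 : m < T) :
    (sInf { c | ∃ α : ℝ, 0 ≤ α ∧ c = Cost y γ lam m α } +
        sInf { c | ∃ α : ℝ, 0 ≤ α ∧
          c = Cost (fun t => y (T + 1 - t)) (1/γ) lam (T - m) α } + lam ≤
      sInf { c | ∃ α : ℝ, 0 ≤ α ∧ c = Cost y γ lam m α +
        Cost (fun t => y (T + 1 - t)) (1/γ) lam (T - m) (γ * α) }) ↔
    ∃ (k : ℕ) (τ : ℕ → ℕ), IsSeg 0 T k τ ∧ (∃ j, 1 ≤ j ∧ j ≤ k ∧ τ j = m) ∧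
      objOpt y γ lam k τ =
        sInf { c | ∃ (k' : ℕ) (τ' : ℕ → ℕ), IsSeg 0 T k' τ' ∧
          c = objOpt y γ lam k' τ' } :=
  C_le_Cprime_iff_m_is_changepoint_general T y γ lam hγ m hm1 hm2
end
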